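/- Let G be a finite multigraph on a vertically ordered vertex set partitioned into alternating cycles, with every vertex having at most two lower and at most two upper neighbors, and let G_1, G_2 be the up-edge and down-edge halves. Then the verbose persistence diagrams of G_1 and G_2 in the up direction are equal: for each vertex v_i of height i, both diagrams contain the point (i, ∞) if ldeg_G(v_i) = 0, and the point (i, i) if ldeg_G(v_i) > 0; and neither diagram has any points in homological dimension 1 off or on the diagonal other than none (both graphs are forests). -/

import Mathlib

/-! Common definitions: vertical (multi)graphs on `Fin n` (vertices ordered by height,
vertex `v` at height `(v : ℕ)`), edges stored as pairs `(lower, upper)`. -/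

/-- Number of edges of `E` from `v` to strictly lower vertices
(i.e. edges whose upper endpoint is `v`), with multiplicity. -/
def ldeg {n : ℕ} (E : Multiset (Fin n × Fin n)) (v : Fin n) : ℕ :=
  (E.filter (fun e => e.2 = v)).card

/-- Number of edges of `E` from `v` to strictly higher vertices
(i.e. edges whose lower endpoint is `v`), with multiplicity. -/
def hdeg {n : ℕ} (E : Multiset (Fin n × Fin n)) (v : Fin n) : ℕ :=
  (E.filter (fun e => e.1 = v)).card

/-- An alternating cycle: a closed walk `w 0, w 1, …, w (2m) = w 0` whose edges
alternately go up and down (odd-indexed vertices are above both cyclic neighbours). -/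
structure AltCycle (n : ℕ) where
  m : ℕ
  pos : 0 < m
  w : ℕ → Fin n
  closed : w (2 * m) = w 0
  up : ∀ j < m, w (2 * j) < w (2 * j + 1)
  down : ∀ j < m, w (2 * j + 2) < w (2 * j + 1)

/-- The up-edges of an alternating cycle (as `(lower, upper)` pairs). -/
def AltCycle.upEdges {n : ℕ} (C : AltCycle n) : Multiset (Fin n × Fin n) :=
  (Multiset.range C.m).map (fun j => (C.w (2 * j), C.w (2 * j + 1)))

/-- The down-edges of an alternating cycle (as `(lower, upper)` pairs). -/
def AltCycle.downEdges {n : ℕ} (C : AltCycle n) : Multiset (Fin n × Fin n) :=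
  (Multiset.range C.m).map (fun j => (C.w (2 * j + 2), C.w (2 * j + 1)))

/-- All edges of an alternating cycle. -/
def AltCycle.edges {n : ℕ} (C : AltCycle n) : Multiset (Fin n × Fin n) :=
  C.upEdges + C.downEdges

/-- The edge multiset `E` can be partitioned into alternating cycles. -/
def AltPartition {n : ℕ} (E : Multiset (Fin n × Fin n)) : Prop :=
  ∃ (k : ℕ) (Cs : Fin k → AltCycle n), E = ∑ i, (Cs i).edges

/-- The undirected edge between `a` and `b`, stored as a `(lower, upper)` pair. -/
def stepEdge {n : ℕ} (a b : Fin n) : Fin n × Fin n := if a < b then (a, b) else (b, a)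

/-- `E` contains a (vertex-simple) cycle: a closed walk with pairwise distinct vertices
whose (undirected) edge multiset is contained in `E`. -/
def HasCycle {n : ℕ} (E : Multiset (Fin n × Fin n)) : Prop :=
  ∃ (len : ℕ) (w : ℕ → Fin n), 0 < len ∧ w len = w 0 ∧
    (∀ i < len, ∀ j < len, w i = w j → i = j) ∧
    ((Multiset.range len).map (fun j => stepEdge (w j) (w (j + 1)))) ≤ E

/-- Reachability (connectivity) in the multigraph with edge multiset `E`. -/
def Reach {n : ℕ} (E : Multiset (Fin n × Fin n)) (a b : Fin n) : Prop :=
  Relation.ReflTransGen (fun x y => (x, y) ∈ E ∨ (y, x) ∈ E) a b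

/-- The connected component of `v` in `E` is a single vertex or a path along
vertices of strictly increasing height. -/
def IncPathComp {n : ℕ} (E : Multiset (Fin n × Fin n)) (v : Fin n) : Prop :=
  ∃ (m : ℕ) (p : Fin (m + 1) → Fin n), StrictMono p ∧
    (∀ u, Reach E v u ↔ ∃ i, p i = u) ∧
    (∀ i : Fin m, (p i.castSucc, p i.succ) ∈ E)

/-- The edges present at stage `j` of the upward lower-star filtration:
those whose upper endpoint has height at most `j`. -/
def levelEdges {n : ℕ} (E : Multiset (Fin n × Fin n)) (j : ℕ) : Multiset (Fin n × Fin n) :=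
  E.filter (fun e => (e.2 : ℕ) ≤ j)

/-- Death time (elder rule) of the 0-dimensional class created by vertex `v` in the
upward lower-star filtration: the first height at which `v` gets connected to a
strictly lower (older) vertex, or `∞` if this never happens. -/
noncomputable def death0 {n : ℕ} (E : Multiset (Fin n × Fin n)) (v : Fin n) : ℕ∞ :=
  sInf ((fun j : ℕ => (j : ℕ∞)) '' {j : ℕ | ∃ u, u < v ∧ Reach (levelEdges E j) u v})

/-- The 0-dimensional verbose persistence diagram in the up direction: one point
per vertex, born at the height of the vertex. -/
noncomputable def diag0 {n : ℕ} (E : Multiset (Fin n × Fin n)) : Multiset (ℕ × ℕ∞) :=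
  (Finset.univ.val : Multiset (Fin n)).map (fun v : Fin n => ((v : ℕ), death0 E v))

/-- Number of edges entering at height `j` (upper endpoint of height `j`). -/
def edgesAt {n : ℕ} (E : Multiset (Fin n × Fin n)) (j : ℕ) : ℕ :=
  (E.filter (fun e => (e.2 : ℕ) = j)).card

/-- Number of 0-dimensional points dying at height `j` in the verbose diagram. -/
noncomputable def deaths0At {n : ℕ} (E : Multiset (Fin n × Fin n)) (j : ℕ) : ℕ :=
  Nat.card {v : Fin n // death0 E v = (j : ℕ∞)}

/-- Number of 1-dimensional classes born at height `j`: edges entering at height `j`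
that are creators rather than destructors. -/
noncomputable def cyclesBornAt {n : ℕ} (E : Multiset (Fin n × Fin n)) (j : ℕ) : ℕ :=
  edgesAt E j - deaths0At E j

/-- The graph with the vertical order reversed (for the down direction). -/
def flipE {n : ℕ} (E : Multiset (Fin n × Fin n)) : Multiset (Fin n × Fin n) :=
  E.map (fun e => (e.2.rev, e.1.rev))

/-- Equality of the verbose persistence diagrams in the up direction. -/
def UpDiagEq {n : ℕ} (E1 E2 : Multiset (Fin n × Fin n)) : Prop :=
  diag0 E1 = diag0 E2 ∧ ∀ j, cyclesBornAt E1 j = cyclesBornAt E2 j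

/-- Equality of VPHTs for vertical graphs: the verbose diagrams agree in both the
up and the down direction. -/
def VPHTEq {n : ℕ} (E1 E2 : Multiset (Fin n × Fin n)) : Prop :=
  UpDiagEq E1 E2 ∧ UpDiagEq (flipE E1) (flipE E2)

/-- Number of connected components of the multigraph with edge multiset `E`. -/
noncomputable def numComponents {n : ℕ} (E : Multiset (Fin n × Fin n)) : ℕ :=
  Nat.card (Quot (Reach E))

/-- The edge multiset `E` can be partitioned into cycles (closed trails). -/
def CircuitPartition {n : ℕ} (E : Multiset (Fin n × Fin n)) : Prop :=
  ∃ (k : ℕ) (len : Fin k → ℕ) (w : Fin k → ℕ → Fin n),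
    (∀ i, 0 < len i) ∧ (∀ i, w i (len i) = w i 0) ∧
    (∀ i, ∀ j < len i, w i j ≠ w i (j + 1)) ∧
    (∑ i, (Multiset.range (len i)).map (fun j => stepEdge (w i j) (w i (j + 1)))) = E

/-! In each alternating cycle every peak has exactly one up-edge and one down-edge below it,
so both halves have the same lower degree at every vertex, and since the two add up to
`ldeg G ≤ 2`, both are at most one. A graph with all edges ascending and lower degrees at most
one is a forest of increasing paths: following lower neighbours downward from any vertex ends
at the bottom of its component, so a vertex without a lower neighbour is the lowest point of its
component and its class never dies, while a vertex with a lower neighbour is merged into an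
older class the moment it appears. Hence the diagram of either half is determined by the lower
degrees alone, and every entering edge kills a class, so no 1-cycle is ever born. -/

section VerticalGraph

variable {n : ℕ}

def IsAscending (G : Multiset (Fin n × Fin n)) : Prop :=
  ∀ e ∈ G, e.1 < e.2

lemma isAscending_sum {ι : Type*} {s : Finset ι} {f : ι → Multiset (Fin n × Fin n)}
    (hf : ∀ i ∈ s, IsAscending (f i)) : IsAscending (∑ i ∈ s, f i) := by
  intro e he
  obtain ⟨i, hi, hei⟩ := Multiset.mem_sum.1 he
  exact hf i hi e hei

lemma IsAscending.levelEdges {G : Multiset (Fin n × Fin n)} (hG : IsAscending G) (j : ℕ) :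
    IsAscending (levelEdges G j) :=
  fun e he => hG e (Multiset.mem_of_mem_filter he)

lemma AltCycle.isAscending_upEdges (C : AltCycle n) : IsAscending C.upEdges := by
  intro e he
  obtain ⟨j, hj, rfl⟩ := Multiset.mem_map.1 he
  exact C.up j (Multiset.mem_range.1 hj)

lemma AltCycle.isAscending_downEdges (C : AltCycle n) : IsAscending C.downEdges := by
  intro e he
  obtain ⟨j, hj, rfl⟩ := Multiset.mem_map.1 he
  exact C.down j (Multiset.mem_range.1 hj)

lemma ldeg_add (A B : Multiset (Fin n × Fin n)) (v : Fin n) :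
    ldeg (A + B) v = ldeg A v + ldeg B v := by
  simp only [ldeg, Multiset.filter_add, Multiset.card_add]

lemma ldeg_sum {ι : Type*} (s : Finset ι) (f : ι → Multiset (Fin n × Fin n)) (v : Fin n) :
    ldeg (∑ i ∈ s, f i) v = ∑ i ∈ s, ldeg (f i) v := by
  simp only [ldeg, ← Multiset.countP_eq_card_filter]
  exact map_sum (Multiset.countPAddMonoidHom _) f s

lemma ldeg_levelEdges_le (G : Multiset (Fin n × Fin n)) (j : ℕ) (v : Fin n) :
    ldeg (levelEdges G j) v ≤ ldeg G v :=
  Multiset.card_le_card (Multiset.filter_le_filter _ (Multiset.filter_le _ G))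

lemma AltCycle.ldeg_upEdges_eq_ldeg_downEdges (C : AltCycle n) (v : Fin n) :
    ldeg C.upEdges v = ldeg C.downEdges v := by
  simp [ldeg, AltCycle.upEdges, AltCycle.downEdges, Multiset.filter_map]

lemma Multiset.eq_of_mem_of_card_le_one {α : Type*} {s : Multiset α} {a b : α}
    (hs : Multiset.card s ≤ 1) (ha : a ∈ s) (hb : b ∈ s) : a = b := by
  obtain ⟨x, rfl⟩ :=
    Multiset.card_eq_one.1 (le_antisymm hs (Multiset.card_pos_iff_exists_mem.2 ⟨a, ha⟩))
  rw [Multiset.mem_singleton] at ha hb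
  rw [ha, hb]

lemma eq_of_mem_of_ldeg_le_one {G : Multiset (Fin n × Fin n)} {a b v : Fin n}
    (hv : ldeg G v ≤ 1) (ha : (a, v) ∈ G) (hb : (b, v) ∈ G) : a = b := by
  have := Multiset.eq_of_mem_of_card_le_one hv (Multiset.mem_filter.2 ⟨ha, rfl⟩)
    (Multiset.mem_filter.2 ⟨hb, rfl⟩)
  exact (Prod.ext_iff.1 this).1

lemma ldeg_pos_of_mem {G : Multiset (Fin n × Fin n)} {a v : Fin n} (h : (a, v) ∈ G) :
    0 < ldeg G v :=
  Multiset.card_pos_iff_exists_mem.2 ⟨_, Multiset.mem_filter.2 ⟨h, rfl⟩⟩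

lemma Reach.symm {G : Multiset (Fin n × Fin n)} {a b : Fin n} (h : Reach G a b) :
    Reach G b a :=
  Relation.ReflTransGen.mono (fun _ _ => Or.symm) _ _ (Relation.ReflTransGen.swap _ _ h)

/-- The invariant is that `v` is reachable from the current vertex by descending along edges;
a step down preserves it because a vertex has at most one edge below it. -/
lemma le_of_reach_of_ldeg_eq_zero {G : Multiset (Fin n × Fin n)} (hG : IsAscending G)
    (hG1 : ∀ u, ldeg G u ≤ 1) {v u : Fin n} (hv : ldeg G v = 0) (h : Reach G v u) : v ≤ u := by
  let Down : Fin n → Fin n → Prop := fun x y => (y, x) ∈ G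
  suffices hdesc : Relation.ReflTransGen Down u v by
    clear h hv
    induction hdesc with
    | refl => exact le_rfl
    | tail _ hstep ih => exact (hG _ hstep).le.trans ih
  induction h with
  | refl => exact .refl
  | @tail b c _ hbc ih =>
    rcases hbc with hup | hdown
    · exact .head hup ih
    · rcases ih.cases_head with rfl | ⟨d, hbd, hdv⟩
      · exact absurd (ldeg_pos_of_mem hdown) (by omega)
      · rwa [eq_of_mem_of_ldeg_le_one (hG1 b) hdown hbd]

lemma eq_of_reach_levelEdges_of_lt {G : Multiset (Fin n × Fin n)} (hG : IsAscending G)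
    {j : ℕ} {u v : Fin n} (hj : j < v) (h : Reach (levelEdges G j) u v) : u = v := by
  have hfar : ∀ e ∈ levelEdges G j, e.1 ≠ v ∧ e.2 ≠ v := by
    intro e he
    have hlt : (e.1 : ℕ) < e.2 := hG.levelEdges j e he
    have hle : (e.2 : ℕ) ≤ j := (Multiset.mem_filter.1 he).2
    exact ⟨fun h => by subst h; omega, fun h => by subst h; omega⟩
  rcases h.cases_tail with rfl | ⟨c, _, hcv | hvc⟩
  · rfl
  · exact absurd rfl (hfar _ hcv).2
  · exact absurd rfl (hfar _ hvc).1

lemma death0_eq_top {G : Multiset (Fin n × Fin n)} (hG : IsAscending G)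
    (hG1 : ∀ u, ldeg G u ≤ 1) {v : Fin n} (hv : ldeg G v = 0) : death0 G v = ⊤ := by
  have hnever : {j : ℕ | ∃ u, u < v ∧ Reach (levelEdges G j) u v} = ∅ := by
    refine Set.eq_empty_of_forall_notMem fun j ⟨u, huv, hreach⟩ => huv.not_ge ?_
    refine le_of_reach_of_ldeg_eq_zero (hG.levelEdges j)
      (fun w => (ldeg_levelEdges_le G j w).trans (hG1 w)) ?_ hreach.symm
    exact Nat.eq_zero_of_le_zero (hv ▸ ldeg_levelEdges_le G j v)
  rw [death0, hnever, Set.image_empty, sInf_empty]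

lemma death0_eq_self {G : Multiset (Fin n × Fin n)} (hG : IsAscending G) {v : Fin n}
    (hv : 0 < ldeg G v) : death0 G v = (v : ℕ) := by
  obtain ⟨⟨a, b⟩, he⟩ := Multiset.card_pos_iff_exists_mem.1 hv
  obtain ⟨hab, rfl : b = v⟩ := Multiset.mem_filter.1 he
  have hdies : (b : ℕ) ∈ {j : ℕ | ∃ u, u < b ∧ Reach (levelEdges G j) u b} :=
    ⟨a, hG _ hab, .single (.inl (Multiset.mem_filter.2 ⟨hab, le_rfl⟩))⟩
  refine le_antisymm (sInf_le ⟨_, hdies, rfl⟩) (le_sInf ?_)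
  rintro _ ⟨j, ⟨u, hub, hreach⟩, rfl⟩
  by_contra! hjb
  exact hub.ne (eq_of_reach_levelEdges_of_lt hG (by exact_mod_cast hjb) hreach)

lemma death0_eq_ite {G : Multiset (Fin n × Fin n)} (hG : IsAscending G)
    (hG1 : ∀ u, ldeg G u ≤ 1) (v : Fin n) :
    death0 G v = if ldeg G v = 0 then ⊤ else ((v : ℕ) : ℕ∞) := by
  split_ifs with hv
  · exact death0_eq_top hG hG1 hv
  · exact death0_eq_self hG (Nat.pos_of_ne_zero hv)

lemma edgesAt_val (G : Multiset (Fin n × Fin n)) (v : Fin n) : edgesAt G v = ldeg G v := by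
  simp only [edgesAt, ldeg, Fin.val_inj]

lemma cyclesBornAt_eq_zero {G : Multiset (Fin n × Fin n)} (hG : IsAscending G)
    (hG1 : ∀ u, ldeg G u ≤ 1) (j : ℕ) : cyclesBornAt G j = 0 := by
  rcases Nat.eq_zero_or_pos (edgesAt G j) with h0 | hpos
  · rw [cyclesBornAt, h0, Nat.zero_sub]
  obtain ⟨⟨a, v⟩, he⟩ := Multiset.card_pos_iff_exists_mem.1 hpos
  obtain ⟨hav, rfl : (v : ℕ) = j⟩ := Multiset.mem_filter.1 he
  have hdeath : 1 ≤ deaths0At G v :=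
    Nat.card_pos_iff.2 ⟨⟨⟨v, death0_eq_self hG (ldeg_pos_of_mem hav)⟩⟩, inferInstance⟩
  rw [cyclesBornAt, edgesAt_val]
  have := hG1 v
  omega

end VerticalGraph

theorem halves_same_up_verbose_diagram_general {n : ℕ} (E : Multiset (Fin n × Fin n))
    (k : ℕ) (Cs : Fin k → AltCycle n) (hpart : E = ∑ i, (Cs i).edges)
    (hl : ∀ v : Fin n, ldeg E v ≤ 2)
    (G1 G2 : Multiset (Fin n × Fin n))
    (hG1 : G1 = ∑ i, (Cs i).upEdges) (hG2 : G2 = ∑ i, (Cs i).downEdges) :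
    UpDiagEq G1 G2 ∧
    (∀ v : Fin n,
      (ldeg E v = 0 → death0 G1 v = ⊤ ∧ death0 G2 v = ⊤) ∧
      (0 < ldeg E v → death0 G1 v = ((v : ℕ) : ℕ∞) ∧ death0 G2 v = ((v : ℕ) : ℕ∞))) ∧
    (∀ j : ℕ, cyclesBornAt G1 j = 0 ∧ cyclesBornAt G2 j = 0) := by
  have hasc1 : IsAscending G1 := hG1 ▸ isAscending_sum fun i _ => (Cs i).isAscending_upEdges
  have hasc2 : IsAscending G2 := hG2 ▸ isAscending_sum fun i _ => (Cs i).isAscending_downEdges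
  have hsame : ∀ v, ldeg G1 v = ldeg G2 v := fun v => by
    rw [hG1, hG2, ldeg_sum, ldeg_sum]
    exact Finset.sum_congr rfl fun i _ => (Cs i).ldeg_upEdges_eq_ldeg_downEdges v
  have hsplit : ∀ v, ldeg E v = ldeg G1 v + ldeg G2 v := fun v => by
    simp only [hpart, hG1, hG2, AltCycle.edges, Finset.sum_add_distrib, ldeg_add]
  have hle1 : ∀ v, ldeg G1 v ≤ 1 := fun v => by
    have := hl v
    rw [hsplit, ← hsame] at this
    omega
  have hle2 : ∀ v, ldeg G2 v ≤ 1 := fun v => hsame v ▸ hle1 v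
  have hdeath1 := death0_eq_ite hasc1 hle1
  have hdeath2 := death0_eq_ite hasc2 hle2
  have hborn1 := cyclesBornAt_eq_zero hasc1 hle1
  have hborn2 := cyclesBornAt_eq_zero hasc2 hle2
  refine ⟨⟨?_, fun j => by rw [hborn1, hborn2]⟩, fun v => ?_, fun j => ⟨hborn1 j, hborn2 j⟩⟩
  · exact Multiset.map_congr rfl fun v _ => by rw [hdeath1, hdeath2, hsame]
  · rw [hdeath1, hdeath2, ← hsame, hsplit, ← hsame]
    rcases Nat.eq_zero_or_pos (ldeg G1 v) with h0 | hpos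
    · simp [h0]
    · simp [hpos.ne']

/-- For a vertical multigraph partitioned into alternating cycles in
which every vertex has at most two lower and at most two upper neighbours, the
up-direction verbose diagrams of the two halves `G₁`, `G₂` are equal; each vertex
`v` contributes the point `(v, ∞)` to both if `ldeg_G(v) = 0` and the point `(v, v)`
if `ldeg_G(v) > 0`, and neither half has any 1-dimensional points (both are forests). -/
theorem halves_same_up_verbose_diagram {n : ℕ} (E : Multiset (Fin n × Fin n))
    (k : ℕ) (Cs : Fin k → AltCycle n) (hpart : E = ∑ i, (Cs i).edges)
    (hl : ∀ v : Fin n, ldeg E v ≤ 2) (hh : ∀ v : Fin n, hdeg E v ≤ 2)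
    (G1 G2 : Multiset (Fin n × Fin n))
    (hG1 : G1 = ∑ i, (Cs i).upEdges) (hG2 : G2 = ∑ i, (Cs i).downEdges) :
    UpDiagEq G1 G2 ∧
    (∀ v : Fin n,
      (ldeg E v = 0 → death0 G1 v = ⊤ ∧ death0 G2 v = ⊤) ∧
      (0 < ldeg E v → death0 G1 v = ((v : ℕ) : ℕ∞) ∧ death0 G2 v = ((v : ℕ) : ℕ∞))) ∧
    (∀ j : ℕ, cyclesBornAt G1 j = 0 ∧ cyclesBornAt G2 j = 0) :=
  halves_same_up_verbose_diagram_general E k Cs hpart hl G1 G2 hG1 hG2
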